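/- arXiv:2410.04437 — 2 statements merged into one kernel-verified Lean document; each statement's English description precedes it below -/
import Mathlib

section
/- Let X be a BK-space of real sequences over ℕ that is solid, contains every finitely supported sequence, and has the Fatou property. Then X coincides with its second Köthe dual X^{αα}, and ‖x‖_{X^{αα}} = ‖x‖_X for every x ∈ X. -/
/-!
Hölder's inequality for the Köthe pairing gives `‖x‖_{X^{αα}} ≤ ‖x‖_X`. Conversely, if `x` is
finitely supported and `φ` is a Hahn–Banach functional norming `x`, solidity puts
`n ↦ |φ (e n)|`, with `e n` the unit vectors, in the unit ball of `X^α`, and pairing it with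
`x` recovers `‖x‖_X`.

For `g ∈ X^{αα}` a gliding hump shows `‖g‖_{X^{αα}} < ∞`: otherwise there are `h_K` in the unit
ball of `X^α` with `∑ |g h_K| > 2^K K`, and `H = ∑ 2^{-K} |h_K|` lies in `X^α` with
`∑ |g H| ≥ K` for every `K`. The truncations of `|g|` therefore have `X`-norms bounded by
`‖g‖_{X^{αα}}`, and the Fatou property puts `|g|`, hence by solidity `g`, in `X` with
`‖g‖_X ≤ ‖g‖_{X^{αα}}`.
-/

open Filter

/-- Membership in the Köthe dual `X^α` of a BK-space `X` (modeled by `j : E →ₗ (ℕ → ℝ)`):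
`h ∈ X^α` iff `∑ |h n · x n| < ∞` for all `x ∈ X`. -/
def memKotheDual {E : Type*} [NormedAddCommGroup E] [NormedSpace ℝ E]
    (j : E →ₗ[ℝ] (ℕ → ℝ)) (h : ℕ → ℝ) : Prop :=
  ∀ x : E, Summable fun n => |h n * j x n|

/-- The Köthe dual norm `‖h‖_{X^α} = sup { ∑ |h n · x n| : ‖x‖_X ≤ 1 }` in `ℝ≥0∞`. -/
noncomputable def kotheDualNorm {E : Type*} [NormedAddCommGroup E] [NormedSpace ℝ E]
    (j : E →ₗ[ℝ] (ℕ → ℝ)) (h : ℕ → ℝ) : ENNReal :=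
  ⨆ (x : E) (_ : ‖x‖ ≤ 1), ∑' n, (‖h n * j x n‖₊ : ENNReal)

/-- The second Köthe dual norm `‖g‖_{X^{αα}} = sup { ∑ |g n · h n| : h ∈ X^α, ‖h‖_{X^α} ≤ 1 }`. -/
noncomputable def kotheBidualNorm {E : Type*} [NormedAddCommGroup E] [NormedSpace ℝ E]
    (j : E →ₗ[ℝ] (ℕ → ℝ)) (g : ℕ → ℝ) : ENNReal :=
  ⨆ (h : ℕ → ℝ) (_ : memKotheDual j h ∧ kotheDualNorm j h ≤ 1),
    ∑' n, (‖g n * h n‖₊ : ENNReal)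

open scoped ENNReal

theorem tsum_inv_two_pow_mul (a : ℝ≥0∞) : ∑' K : ℕ, 2⁻¹ ^ K * a = 2 * a := by
  rw [ENNReal.tsum_mul_right, ENNReal.tsum_geometric, ENNReal.one_sub_inv_two, inv_inv]

section KotheDual

variable {E : Type*} [NormedAddCommGroup E] [NormedSpace ℝ E] (j : E →ₗ[ℝ] (ℕ → ℝ))

def IsSolid : Prop :=
  ∀ (x : E) (y : ℕ → ℝ), (∀ n, |y n| ≤ |j x n|) → ∃ z : E, j z = y ∧ ‖z‖ ≤ ‖x‖

def HasFatouProperty : Prop :=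
  ∀ (xk : ℕ → E) (f : ℕ → ℝ),
    (∀ n, 0 ≤ j (xk 0) n) →
    (∀ n, Monotone fun k => j (xk k) n) →
    (∀ n, Tendsto (fun k => j (xk k) n) atTop (nhds (f n))) →
    BddAbove (Set.range fun k => ‖xk k‖) →
    ∃ z : E, j z = f ∧ Monotone (fun k => ‖xk k‖) ∧ Tendsto (fun k => ‖xk k‖) atTop (nhds ‖z‖)

theorem memKotheDual_iff {h : ℕ → ℝ} :
    memKotheDual j h ↔ ∀ x : E, ∑' n, ‖h n * j x n‖ₑ ≠ ∞ := by
  simp only [memKotheDual, tsum_enorm_ne_top_iff_summable_norm, Real.norm_eq_abs]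

theorem tsum_enorm_mul_le_kotheDualNorm_mul (h : ℕ → ℝ) (x : E) :
    ∑' n, ‖h n * j x n‖ₑ ≤ kotheDualNorm j h * ENNReal.ofReal ‖x‖ := by
  rcases eq_or_ne x 0 with rfl | hx
  · simp
  have hx' : ‖x‖ ≠ 0 := norm_ne_zero_iff.mpr hx
  set y := ‖x‖⁻¹ • x
  have hy : ‖y‖ ≤ 1 := by simp [y, norm_smul, hx']
  have hjx : j x = ‖x‖ • j y := by simp [y, smul_smul, hx']
  calc ∑' n, ‖h n * j x n‖ₑ = ENNReal.ofReal ‖x‖ * ∑' n, ‖h n * j y n‖ₑ := by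
        rw [← ENNReal.tsum_mul_left]
        congr with n
        rw [hjx, Pi.smul_apply, smul_eq_mul, mul_left_comm, enorm_mul,
          Real.enorm_of_nonneg (norm_nonneg x)]
    _ ≤ ENNReal.ofReal ‖x‖ * kotheDualNorm j h := by
        gcongr
        exact le_iSup₂ (f := fun (y : E) (_ : ‖y‖ ≤ 1) => ∑' n, (‖h n * j y n‖₊ : ℝ≥0∞)) y hy
    _ = kotheDualNorm j h * ENNReal.ofReal ‖x‖ := mul_comm _ _

theorem memKotheDual_of_kotheDualNorm_ne_top {h : ℕ → ℝ} (hh : kotheDualNorm j h ≠ ∞) :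
    memKotheDual j h :=
  (memKotheDual_iff j).mpr fun x => ne_top_of_le_ne_top
    (ENNReal.mul_ne_top hh ENNReal.ofReal_ne_top) (tsum_enorm_mul_le_kotheDualNorm_mul j h x)

theorem kotheBidualNorm_apply_le (x : E) : kotheBidualNorm j (j x) ≤ ENNReal.ofReal ‖x‖ := by
  refine iSup₂_le fun h hh => ?_
  calc ∑' n, ‖j x n * h n‖ₑ = ∑' n, ‖h n * j x n‖ₑ := by simp only [mul_comm]
    _ ≤ kotheDualNorm j h * ENNReal.ofReal ‖x‖ := tsum_enorm_mul_le_kotheDualNorm_mul j h x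
    _ ≤ ENNReal.ofReal ‖x‖ := mul_le_of_le_one_left' hh.2

theorem kotheBidualNorm_mono {g g' : ℕ → ℝ} (hle : ∀ n, |g n| ≤ |g' n|) :
    kotheBidualNorm j g ≤ kotheBidualNorm j g' := by
  refine iSup₂_mono fun h _ => ENNReal.tsum_le_tsum fun n => ?_
  simp only [← enorm_eq_nnnorm, enorm_mul]
  gcongr
  simpa only [Real.enorm_eq_ofReal_abs] using ENNReal.ofReal_le_ofReal (hle n)

theorem norm_le_of_abs_le (hsolid : IsSolid j) (hinj : Function.Injective j) {x y : E}
    (hle : ∀ n, |j y n| ≤ |j x n|) : ‖y‖ ≤ ‖x‖ := by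
  obtain ⟨z, hz, hzx⟩ := hsolid x (j y) hle
  rwa [← hinj hz]

theorem norm_eq_of_abs_eq (hsolid : IsSolid j) (hinj : Function.Injective j) {x y : E}
    (heq : ∀ n, |j y n| = |j x n|) : ‖y‖ = ‖x‖ :=
  le_antisymm (norm_le_of_abs_le j hsolid hinj fun n => (heq n).le)
    (norm_le_of_abs_le j hsolid hinj fun n => (heq n).ge)

variable {e : ℕ → E}

theorem apply_sum_smul_eq_indicator (he : ∀ n, j (e n) = Pi.single n 1) (s : Finset ℕ)
    (u : ℕ → ℝ) :
    j (∑ n ∈ s, u n • e n) = (s : Set ℕ).indicator u := by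
  ext m
  simp [map_sum, he, Finset.sum_apply, Pi.single_apply, Set.indicator]

theorem enorm_le_kotheDualNorm_mul (he : ∀ n, j (e n) = Pi.single n 1) (h : ℕ → ℝ) (n : ℕ) :
    ‖h n‖ₑ ≤ kotheDualNorm j h * ENNReal.ofReal ‖e n‖ := by
  have := tsum_enorm_mul_le_kotheDualNorm_mul j h (e n)
  rwa [he, tsum_eq_single n fun m hm => by simp [hm], Pi.single_eq_same, mul_one] at this

theorem sum_abs_mul_abs_le (he : ∀ n, j (e n) = Pi.single n 1) (hsolid : IsSolid j)
    (hinj : Function.Injective j) (φ : E →L[ℝ] ℝ) (x : E) (s : Finset ℕ) :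
    ∑ n ∈ s, |φ (e n)| * |j x n| ≤ ‖φ‖ * ‖x‖ := by
  -- The signs make `φ z = ∑ |φ (e n)| * |x n|`, while `|z n| ≤ |x n|` for every `n`.
  set u : ℕ → ℝ := fun n => SignType.sign (φ (e n)) * |j x n|
  set z := ∑ n ∈ s, u n • e n
  have hzx : ‖z‖ ≤ ‖x‖ := norm_le_of_abs_le j hsolid hinj fun n => by
    have hsign : |(SignType.sign (φ (e n)) : ℝ)| ≤ 1 := by
      cases SignType.sign (φ (e n)) <;> simp
    simp only [z, apply_sum_smul_eq_indicator j he, Set.indicator_apply]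
    split_ifs
    · simpa only [u, abs_mul, abs_abs] using mul_le_of_le_one_left (abs_nonneg _) hsign
    · simp
  calc ∑ n ∈ s, |φ (e n)| * |j x n| = φ z := by
        simp only [z, u, map_sum, map_smul, smul_eq_mul, mul_right_comm _ _ (φ _), sign_mul_self]
    _ ≤ ‖φ‖ * ‖z‖ := (le_abs_self _).trans (φ.le_opNorm z)
    _ ≤ ‖φ‖ * ‖x‖ := by gcongr

theorem kotheDualNorm_abs_apply_le (he : ∀ n, j (e n) = Pi.single n 1) (hsolid : IsSolid j)
    (hinj : Function.Injective j) (φ : E →L[ℝ] ℝ) :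
    kotheDualNorm j (fun n => |φ (e n)|) ≤ ENNReal.ofReal ‖φ‖ := by
  refine iSup₂_le fun x hx => ENNReal.tsum_le_of_sum_range_le fun N => ?_
  calc ∑ n ∈ Finset.range N, ‖|φ (e n)| * j x n‖ₑ
      = ENNReal.ofReal (∑ n ∈ Finset.range N, |φ (e n)| * |j x n|) := by
        rw [ENNReal.ofReal_sum_of_nonneg fun n _ => by positivity]
        simp only [Real.enorm_eq_ofReal_abs, abs_mul, abs_abs]
    _ ≤ ENNReal.ofReal (‖φ‖ * ‖x‖) :=
        ENNReal.ofReal_le_ofReal (sum_abs_mul_abs_le j he hsolid hinj φ x _)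
    _ ≤ ENNReal.ofReal ‖φ‖ :=
        ENNReal.ofReal_le_ofReal (mul_le_of_le_one_right (norm_nonneg _) hx)

theorem ofReal_norm_le_kotheBidualNorm (he : ∀ n, j (e n) = Pi.single n 1) (hsolid : IsSolid j)
    (hinj : Function.Injective j) {x : E} (s : Finset ℕ) (hs : ∀ n ∉ s, j x n = 0) :
    ENNReal.ofReal ‖x‖ ≤ kotheBidualNorm j (j x) := by
  rcases eq_or_ne x 0 with rfl | hx
  · simp
  obtain ⟨φ, hφ, hφx⟩ := exists_dual_vector ℝ x (norm_ne_zero_iff.mpr hx)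
  have hxs : x = ∑ n ∈ s, j x n • e n := hinj <| by
    rw [apply_sum_smul_eq_indicator j he, Set.indicator_eq_self.mpr]
    exact fun n hn => by_contra fun hns => hn (hs n hns)
  have hφsum : φ x = ∑ n ∈ s, j x n * φ (e n) := by
    conv_lhs => rw [hxs]
    simp only [map_sum, map_smul, smul_eq_mul]
  have hdual :
      memKotheDual j (fun n => |φ (e n)|) ∧ kotheDualNorm j (fun n => |φ (e n)|) ≤ 1 := by
    have hle := kotheDualNorm_abs_apply_le j he hsolid hinj φ
    rw [hφ, ENNReal.ofReal_one] at hle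
    exact ⟨memKotheDual_of_kotheDualNorm_ne_top j (ne_top_of_le_ne_top ENNReal.one_ne_top hle),
      hle⟩
  calc ENNReal.ofReal ‖x‖ = ENNReal.ofReal (φ x) := by rw [hφx]; rfl
    _ ≤ ENNReal.ofReal (∑ n ∈ s, |j x n| * |φ (e n)|) := by
        rw [hφsum]
        exact ENNReal.ofReal_le_ofReal <|
          Finset.sum_le_sum fun n _ => (le_abs_self _).trans (abs_mul _ _).le
    _ = ∑ n ∈ s, ‖j x n * |φ (e n)|‖ₑ := by
        rw [ENNReal.ofReal_sum_of_nonneg fun n _ => by positivity]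
        simp only [Real.enorm_eq_ofReal_abs, abs_mul, abs_abs]
    _ ≤ ∑' n, ‖j x n * |φ (e n)|‖ₑ := ENNReal.sum_le_tsum s
    _ ≤ kotheBidualNorm j (j x) :=
        le_iSup₂ (f := fun (h : ℕ → ℝ) (_ : memKotheDual j h ∧ kotheDualNorm j h ≤ 1) =>
          ∑' n, (‖j x n * h n‖₊ : ℝ≥0∞)) _ hdual

theorem exists_memKotheDual_enorm_eq_tsum (he : ∀ n, j (e n) = Pi.single n 1)
    (h : ℕ → ℕ → ℝ) (hh : ∀ K, kotheDualNorm j (h K) ≤ 1) :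
    ∃ H : ℕ → ℝ, memKotheDual j H ∧ ∀ n t, ‖t * H n‖ₑ = ∑' K, 2⁻¹ ^ K * ‖t * h K n‖ₑ := by
  set Hₑ : ℕ → ℝ≥0∞ := fun n => ∑' K, 2⁻¹ ^ K * ‖h K n‖ₑ
  have hHₑ : ∀ n, Hₑ n ≠ ∞ := fun n => by
    refine ne_top_of_le_ne_top (b := 2 * ENNReal.ofReal ‖e n‖) (by finiteness) ?_
    rw [← tsum_inv_two_pow_mul]
    refine ENNReal.tsum_le_tsum fun K => ?_
    gcongr
    exact (enorm_le_kotheDualNorm_mul j he (h K) n).trans (mul_le_of_le_one_left' (hh K))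
  have hH : ∀ n t, ‖t * (Hₑ n).toReal‖ₑ = ∑' K, 2⁻¹ ^ K * ‖t * h K n‖ₑ := fun n t => by
    rw [enorm_mul, Real.enorm_of_nonneg ENNReal.toReal_nonneg, ENNReal.ofReal_toReal (hHₑ n),
      ← ENNReal.tsum_mul_left]
    congr with K
    rw [enorm_mul]
    ring
  refine ⟨fun n => (Hₑ n).toReal, (memKotheDual_iff j).mpr fun x => ?_, hH⟩
  refine ne_top_of_le_ne_top (b := 2 * ENNReal.ofReal ‖x‖) (by finiteness) ?_
  calc ∑' n, ‖(Hₑ n).toReal * j x n‖ₑ = ∑' n, ∑' K, 2⁻¹ ^ K * ‖h K n * j x n‖ₑ := by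
        simp only [mul_comm _ (j x _), hH]
    _ = ∑' K, 2⁻¹ ^ K * ∑' n, ‖h K n * j x n‖ₑ := by
        rw [ENNReal.tsum_comm]
        simp only [ENNReal.tsum_mul_left]
    _ ≤ ∑' K, 2⁻¹ ^ K * ENNReal.ofReal ‖x‖ := ENNReal.tsum_le_tsum fun K => by
        gcongr
        exact (tsum_enorm_mul_le_kotheDualNorm_mul j (h K) x).trans
          (mul_le_of_le_one_left' (hh K))
    _ = 2 * ENNReal.ofReal ‖x‖ := tsum_inv_two_pow_mul _

theorem kotheBidualNorm_ne_top (he : ∀ n, j (e n) = Pi.single n 1) {g : ℕ → ℝ}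
    (hg : ∀ h, memKotheDual j h → Summable fun n => |g n * h n|) :
    kotheBidualNorm j g ≠ ∞ := by
  intro htop
  have hlarge : ∀ K : ℕ, ∃ h, (memKotheDual j h ∧ kotheDualNorm j h ≤ 1) ∧
      2 ^ K * K < ∑' n, ‖g n * h n‖ₑ := fun K => by
    have : (2 : ℝ≥0∞) ^ K * K < kotheBidualNorm j g := htop ▸ by finiteness
    simp only [kotheBidualNorm, lt_iSup_iff, exists_prop] at this
    exact this
  choose h hdual hbig using hlarge
  obtain ⟨H, hHmem, hH⟩ := exists_memKotheDual_enorm_eq_tsum j he h fun K => (hdual K).2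
  have hfin : ∑' n, ‖g n * H n‖ₑ ≠ ∞ := by
    simpa only [tsum_enorm_ne_top_iff_summable_norm, Real.norm_eq_abs] using hg H hHmem
  obtain ⟨K, hK⟩ := ENNReal.exists_nat_gt hfin
  refine hK.not_ge ?_
  calc (K : ℝ≥0∞) = 2⁻¹ ^ K * (2 ^ K * K) := by
        rw [← mul_assoc, ← mul_pow, ENNReal.inv_mul_cancel two_ne_zero ENNReal.ofNat_ne_top,
          one_pow, one_mul]
    _ ≤ 2⁻¹ ^ K * ∑' n, ‖g n * h K n‖ₑ := by gcongr; exact (hbig K).le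
    _ = ∑' n, 2⁻¹ ^ K * ‖g n * h K n‖ₑ := ENNReal.tsum_mul_left.symm
    _ ≤ ∑' n, ‖g n * H n‖ₑ := ENNReal.tsum_le_tsum fun n => by
        rw [hH]
        exact ENNReal.le_tsum (f := fun K => 2⁻¹ ^ K * ‖g n * h K n‖ₑ) K

theorem exists_abs_eq_of_kotheBidualNorm_ne_top (he : ∀ n, j (e n) = Pi.single n 1)
    (hsolid : IsSolid j) (hinj : Function.Injective j) (hfatou : HasFatouProperty j) {g : ℕ → ℝ}
    (hg : kotheBidualNorm j g ≠ ∞) :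
    ∃ w : E, j w = (fun n => |g n|) ∧ ENNReal.ofReal ‖w‖ ≤ kotheBidualNorm j g := by
  set z : ℕ → E := fun k => ∑ n ∈ Finset.Iic k, |g n| • e n
  have hz : ∀ k, j (z k) = (Finset.Iic k : Set ℕ).indicator (fun n => |g n|) := fun k =>
    apply_sum_smul_eq_indicator j he _ _
  have hz_le : ∀ k, ‖z k‖ ≤ (kotheBidualNorm j g).toReal := fun k => by
    refine (ENNReal.ofReal_le_iff_le_toReal hg).mp ?_
    calc ENNReal.ofReal ‖z k‖ ≤ kotheBidualNorm j (j (z k)) :=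
          ofReal_norm_le_kotheBidualNorm j he hsolid hinj (Finset.Iic k) fun n hn => by
            rw [hz, Set.indicator_of_notMem (by simpa using hn)]
      _ ≤ kotheBidualNorm j g := kotheBidualNorm_mono j fun n => by
          simp only [hz, Set.indicator_apply]
          split_ifs <;> simp
  obtain ⟨w, hw, -, hlim⟩ := hfatou z (fun n => |g n|)
    (fun n => by simp only [hz]; exact Set.indicator_nonneg (fun _ _ => abs_nonneg _) n)
    (fun n k k' hkk' => by
      simp only [hz]
      exact Set.indicator_le_indicator_of_subset (by simpa using hkk') (fun _ => abs_nonneg _) n)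
    (fun n => tendsto_atTop_of_eventually_const (i₀ := n) fun k hk => by simp [hz, hk])
    ⟨_, Set.forall_mem_range.mpr hz_le⟩
  exact ⟨w, hw, ENNReal.ofReal_le_of_le_toReal (le_of_tendsto' hlim hz_le)⟩

end KotheDual

theorem solid_fatou_bk_eq_bidual_general
    {E : Type*} [NormedAddCommGroup E] [NormedSpace ℝ E]
    (j : E →ₗ[ℝ] (ℕ → ℝ))
    (hinj : Function.Injective j)
    (hsolid : ∀ (x : E) (y : ℕ → ℝ), (∀ n, |y n| ≤ |j x n|) →
      ∃ z : E, j z = y ∧ ‖z‖ ≤ ‖x‖)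
    (hfin : ∀ y : ℕ → ℝ, (Function.support y).Finite → ∃ z : E, j z = y)
    (hfatou : ∀ (xk : ℕ → E) (f : ℕ → ℝ),
      (∀ n, 0 ≤ j (xk 0) n) →
      (∀ n, Monotone fun k => j (xk k) n) →
      (∀ n, Tendsto (fun k => j (xk k) n) atTop (nhds (f n))) →
      BddAbove (Set.range fun k => ‖xk k‖) →
      ∃ z : E, j z = f ∧ Monotone (fun k => ‖xk k‖) ∧
        Tendsto (fun k => ‖xk k‖) atTop (nhds ‖z‖)) :
    (∀ g : ℕ → ℝ,
      (∀ h : ℕ → ℝ, memKotheDual j h → Summable fun n => |g n * h n|) ↔ ∃ x : E, j x = g) ∧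
    (∀ x : E, kotheBidualNorm j (j x) = ENNReal.ofReal ‖x‖) := by
  choose e he using fun n =>
    hfin (Pi.single n 1) ((Set.finite_singleton n).subset Pi.support_single_subset)
  refine ⟨fun g => ⟨fun hg => ?_, ?_⟩, fun x => (kotheBidualNorm_apply_le j x).antisymm ?_⟩
  · obtain ⟨w, hw, -⟩ := exists_abs_eq_of_kotheBidualNorm_ne_top j he hsolid hinj hfatou
      (kotheBidualNorm_ne_top j he hg)
    obtain ⟨x, hx, -⟩ := hsolid w g fun n => by simp [hw]
    exact ⟨x, hx⟩
  · rintro ⟨x, rfl⟩ h hh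
    simpa only [mul_comm] using hh x
  · obtain ⟨w, hw, hwle⟩ := exists_abs_eq_of_kotheBidualNorm_ne_top j he hsolid hinj hfatou
      (ne_top_of_le_ne_top ENNReal.ofReal_ne_top (kotheBidualNorm_apply_le j x))
    rwa [norm_eq_of_abs_eq j hsolid hinj (x := x) (y := w) fun n => by simp [hw]] at hwle

/-- A solid BK-space `X` of real sequences over `ℕ` containing all finitely
supported sequences and having the Fatou property coincides isometrically with its second
Köthe dual `X^{αα}`. -/
theorem solid_fatou_bk_eq_bidual
    {E : Type*} [NormedAddCommGroup E] [NormedSpace ℝ E] [CompleteSpace E]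
    (j : E →ₗ[ℝ] (ℕ → ℝ))
    (hinj : Function.Injective j)
    (hcoord : ∀ n : ℕ, ∃ C : ℝ, ∀ x : E, |j x n| ≤ C * ‖x‖)
    (hsolid : ∀ (x : E) (y : ℕ → ℝ), (∀ n, |y n| ≤ |j x n|) →
      ∃ z : E, j z = y ∧ ‖z‖ ≤ ‖x‖)
    (hfin : ∀ y : ℕ → ℝ, (Function.support y).Finite → ∃ z : E, j z = y)
    (hfatou : ∀ (xk : ℕ → E) (f : ℕ → ℝ),
      (∀ n, 0 ≤ j (xk 0) n) →
      (∀ n, Monotone fun k => j (xk k) n) →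
      (∀ n, Tendsto (fun k => j (xk k) n) atTop (nhds (f n))) →
      BddAbove (Set.range fun k => ‖xk k‖) →
      ∃ z : E, j z = f ∧ Monotone (fun k => ‖xk k‖) ∧
        Tendsto (fun k => ‖xk k‖) atTop (nhds ‖z‖)) :
    (∀ g : ℕ → ℝ,
      (∀ h : ℕ → ℝ, memKotheDual j h → Summable fun n => |g n * h n|) ↔ ∃ x : E, j x = g) ∧
    (∀ x : E, kotheBidualNorm j (j x) = ENNReal.ofReal ‖x‖) :=
  solid_fatou_bk_eq_bidual_general j hinj hsolid hfin hfatou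
end

section
/- Let B be a Segal algebra on ℝ^d that is strongly character invariant, i.e., for every s ∈ ℝ^d and f ∈ B the pointwise product χ_s·f belongs to B with ‖χ_s·f‖_B = ‖f‖_B, where χ_s(x) := e^{2πi⟨s, x⟩}. Then for every f ∈ B the map s ↦ χ_s·f is continuous from ℝ^d to B. -/
open MeasureTheory Real

/-- The character `χ_s(t) = e^{2πi⟨s,t⟩}` of `ℝ^d`. -/
noncomputable def character {d : ℕ} (s t : Fin d → ℝ) : ℂ :=
  Complex.exp (2 * Real.pi * Complex.I * (∑ i, s i * t i))

/-
Fix `y ∈ B` and, for `ψ ∈ B`, put `ψ ⋆ z = ∫ ψ(a) T_a z da ∈ B`. Then `‖ψ ⋆ z‖_B ≤ ‖ψ‖₁ ‖z‖_B`,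
and since convolution in `L¹` is commutative and `B ↪ L¹` is injective, `ψ ⋆ z = z ⋆ ψ`, whence
`‖ψ ⋆ z‖_B ≤ ‖z‖₁ ‖ψ‖_B`. From `T_a M_s = χ_{-s}(a) M_s T_a` one gets
`ψ ⋆ M_s y = M_s ((χ_{-s} ψ) ⋆ y)`, and therefore
  `‖M_s y - y‖_B ≤ 2 ‖ψ ⋆ y - y‖_B + ‖χ_{-s} ψ - ψ‖₁ ‖y‖_B + ‖χ_s y - y‖₁ ‖ψ‖_B`.
The last two terms tend to `0` with `s` by dominated convergence, while the first is small when
`ψ` is `L¹`-close to a normalized bump of small support (density of `B` in `L¹`). Continuity at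
`s = 0` spreads to all `s` through `M_s M_{s'} = M_{s + s'}`.
-/

open Filter Topology Convolution

section ConvAction

variable {G : Type*} [MeasurableSpace G] {μ : Measure G}
  {E : Type*} [NormedAddCommGroup E] [NormedSpace ℂ E] {T : G → E →ₗ[ℂ] E}

noncomputable def convAction (μ : Measure G) (T : G → E →ₗ[ℂ] E) (g : G → ℂ) (x : E) : E :=
  ∫ a, g a • T a x ∂μ

theorem norm_convAction_le (hTiso : ∀ a x, ‖T a x‖ = ‖x‖) {g : G → ℂ} (hg : Integrable g μ)
    (x : E) : ‖convAction μ T g x‖ ≤ (∫ a, ‖g a‖ ∂μ) * ‖x‖ := by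
  refine (norm_integral_le_of_norm_le (hg.norm.mul_const ‖x‖)
    (Eventually.of_forall fun a => by rw [norm_smul, hTiso])).trans ?_
  rw [integral_mul_const]

variable [TopologicalSpace G] [OpensMeasurableSpace G] [SecondCountableTopology G]

theorem integrable_convAction_integrand (hTiso : ∀ a x, ‖T a x‖ = ‖x‖)
    (hTcont : ∀ x, Continuous fun a => T a x) {g : G → ℂ} (hg : Integrable g μ) (x : E) :
    Integrable (fun a => g a • T a x) μ :=
  (hg.norm.mul_const ‖x‖).mono' (hg.aestronglyMeasurable.smul (hTcont x).aestronglyMeasurable)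
    (Eventually.of_forall fun a => by rw [norm_smul, hTiso])

theorem convAction_sub_left (hTiso : ∀ a x, ‖T a x‖ = ‖x‖)
    (hTcont : ∀ x, Continuous fun a => T a x) {g₁ g₂ : G → ℂ} (hg₁ : Integrable g₁ μ)
    (hg₂ : Integrable g₂ μ) (x : E) :
    convAction μ T (g₁ - g₂) x = convAction μ T g₁ x - convAction μ T g₂ x := by
  simp only [convAction, Pi.sub_apply, sub_smul]
  exact integral_sub (integrable_convAction_integrand hTiso hTcont hg₁ x)
    (integrable_convAction_integrand hTiso hTcont hg₂ x)

theorem convAction_sub_right (hTiso : ∀ a x, ‖T a x‖ = ‖x‖)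
    (hTcont : ∀ x, Continuous fun a => T a x) {g : G → ℂ} (hg : Integrable g μ) (x y : E) :
    convAction μ T g (x - y) = convAction μ T g x - convAction μ T g y := by
  simp only [convAction, map_sub, smul_sub]
  exact integral_sub (integrable_convAction_integrand hTiso hTcont hg x)
    (integrable_convAction_integrand hTiso hTcont hg y)

theorem norm_convAction_sub_self_le [CompleteSpace E] (hTiso : ∀ a x, ‖T a x‖ = ‖x‖)
    (hTcont : ∀ x, Continuous fun a => T a x) {g : G → ℂ} (hg : Integrable g μ)
    (hg_one : ∫ a, g a ∂μ = 1) {x : E} {ε : ℝ} (hε : ∀ a, g a ≠ 0 → ‖T a x - x‖ ≤ ε) :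
    ‖convAction μ T g x - x‖ ≤ ε * ∫ a, ‖g a‖ ∂μ := by
  have hdiff : ∫ a, g a • (T a x - x) ∂μ = convAction μ T g x - x := by
    simp only [convAction, smul_sub]
    rw [integral_sub (integrable_convAction_integrand hTiso hTcont hg x) (hg.smul_const x),
      integral_smul_const, hg_one, one_smul]
  rw [← hdiff, ← integral_const_mul]
  refine norm_integral_le_of_norm_le (hg.norm.const_mul ε) (Eventually.of_forall fun a => ?_)
  rw [norm_smul, mul_comm ε]
  by_cases ha : g a = 0
  · simp [ha]
  · exact mul_le_mul_of_nonneg_left (hε a ha) (norm_nonneg _)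

end ConvAction

section ApproximateIdentity

variable {G : Type*} [NormedAddCommGroup G] [NormedSpace ℝ G] [FiniteDimensional ℝ G]
  [MeasurableSpace G] [BorelSpace G] {μ : Measure G} [μ.IsAddHaarMeasure]
  {E : Type*} [NormedAddCommGroup E] [NormedSpace ℂ E] [CompleteSpace E] {T : G → E →ₗ[ℂ] E}

theorem exists_norm_convAction_sub_self_lt (hTiso : ∀ a x, ‖T a x‖ = ‖x‖)
    (hTcont : ∀ x, Continuous fun a => T a x) {x : E} (hT0 : T 0 x = x) {ε : ℝ} (hε : 0 < ε) :
    ∃ g : G → ℂ, Integrable g μ ∧ ‖convAction μ T g x - x‖ < ε := by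
  obtain ⟨r, hr, hball⟩ := Metric.continuousAt_iff.mp (hTcont x).continuousAt (ε / 2) (half_pos hε)
  let φ : ContDiffBump (0 : G) := ⟨r / 2, r, half_pos hr, half_lt_self hr⟩
  have hφ_norm : ∀ a, ‖(φ.normed μ a : ℂ)‖ = φ.normed μ a := fun a => by
    rw [Complex.norm_real, Real.norm_of_nonneg (φ.nonneg_normed a)]
  have hg : Integrable (fun a => (φ.normed μ a : ℂ)) μ := φ.integrable_normed.ofReal
  refine ⟨_, hg, ?_⟩
  have hsmall : ∀ a, (φ.normed μ a : ℂ) ≠ 0 → ‖T a x - x‖ ≤ ε / 2 := fun a ha => by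
    have ha : a ∈ Function.support (φ.normed μ) := by exact_mod_cast ha
    rw [φ.support_normed_eq, Metric.mem_ball] at ha
    simpa [dist_eq_norm, hT0] using (hball ha).le
  have h := norm_convAction_sub_self_le hTiso hTcont hg
    (by rw [integral_complex_ofReal, φ.integral_normed, Complex.ofReal_one]) hsmall
  simp only [hφ_norm, φ.integral_normed, mul_one] at h
  linarith

theorem exists_norm_convAction_sub_self_lt_of_dense {j : E →ₗ[ℂ] G → ℂ}
    (hint : ∀ x, Integrable (j x) μ)
    (hdense : ∀ g : G → ℂ, Integrable g μ → ∀ ε : ℝ, 0 < ε → ∃ x : E, ∫ t, ‖j x t - g t‖ ∂μ < ε)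
    (hTiso : ∀ a x, ‖T a x‖ = ‖x‖) (hTcont : ∀ x, Continuous fun a => T a x) {x : E}
    (hT0 : T 0 x = x) {ε : ℝ} (hε : 0 < ε) : ∃ ψ : E, ‖convAction μ T (j ψ) x - x‖ < ε := by
  obtain ⟨g, hg, hgx⟩ :=
    exists_norm_convAction_sub_self_lt (μ := μ) hTiso hTcont hT0 (half_pos hε)
  obtain ⟨ψ, hψ⟩ := hdense g hg (ε / 2 / (‖x‖ + 1)) (by positivity)
  refine ⟨ψ, ?_⟩
  have hsplit : convAction μ T (j ψ) x - x =
      convAction μ T (j ψ - g) x + (convAction μ T g x - x) := by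
    rw [convAction_sub_left hTiso hTcont (hint ψ) hg]
    abel
  have happrox : ‖convAction μ T (j ψ - g) x‖ ≤ ε / 2 := calc
    _ ≤ (∫ t, ‖j ψ t - g t‖ ∂μ) * ‖x‖ := norm_convAction_le hTiso ((hint ψ).sub hg) x
    _ ≤ ε / 2 / (‖x‖ + 1) * ‖x‖ := by gcongr
    _ ≤ ε / 2 := by
      rw [div_mul_eq_mul_div, div_le_iff₀ (by positivity)]
      nlinarith [norm_nonneg x]
  rw [hsplit]
  exact (norm_add_le _ _).trans_lt (by linarith)

end ApproximateIdentity

section Embedding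

variable {E : Type*} [NormedAddCommGroup E] [NormedSpace ℂ E] [CompleteSpace E]

theorem setIntegral_apply_integral {X Y : Type*} [MeasurableSpace X] [MeasurableSpace Y]
    {ν : Measure X} {μ : Measure Y} {j : E →ₗ[ℂ] Y → ℂ} (hint : ∀ x, Integrable (j x) μ)
    {C : ℝ} (hC : ∀ x, ∫ t, ‖j x t‖ ∂μ ≤ C * ‖x‖) {F : X → E} (hF : Integrable F ν)
    (S : Set Y) : ∫ t in S, j (∫ a, F a ∂ν) t ∂μ = ∫ a, ∫ t in S, j (F a) t ∂μ ∂ν := by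
  let ℓ : E →L[ℂ] ℂ := LinearMap.mkContinuous
    { toFun := fun x => ∫ t in S, j x t ∂μ
      map_add' := fun x y => by
        simp only [map_add, Pi.add_apply]
        exact integral_add (hint x).integrableOn (hint y).integrableOn
      map_smul' := fun c x => by
        simp only [map_smul, Pi.smul_apply, RingHom.id_apply]
        exact integral_smul c _ }
    C fun x => calc
      ‖∫ t in S, j x t ∂μ‖ ≤ ∫ t in S, ‖j x t‖ ∂μ := norm_integral_le_integral_norm _
      _ ≤ ∫ t, ‖j x t‖ ∂μ := setIntegral_le_integral (hint x).norm
            (Eventually.of_forall fun _ => norm_nonneg _)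
      _ ≤ C * ‖x‖ := hC x
  exact (ℓ.integral_comp_comm hF).symm

variable {G : Type*} [NormedAddCommGroup G] [MeasurableSpace G] [BorelSpace G]
  [SecondCountableTopology G] {μ : Measure G} [SigmaFinite μ] [μ.IsAddRightInvariant]
  {j : E →ₗ[ℂ] G → ℂ} {T : G → E →ₗ[ℂ] E}

theorem apply_convAction_ae_eq_convolution (hint : ∀ x, Integrable (j x) μ)
    {C : ℝ} (hC : ∀ x, ∫ t, ‖j x t‖ ∂μ ≤ C * ‖x‖)
    (hT : ∀ a x, j (T a x) =ᵐ[μ] fun t => j x (t - a)) (hTiso : ∀ a x, ‖T a x‖ = ‖x‖)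
    (hTcont : ∀ x, Continuous fun a => T a x) {g : G → ℂ} (hg : Integrable g μ) (x : E) :
    j (convAction μ T g x) =ᵐ[μ] g ⋆[ContinuousLinearMap.mul ℂ ℂ, μ] (j x) := by
  refine ae_eq_of_forall_setIntegral_eq_of_sigmaFinite (fun _ _ _ => (hint _).integrableOn)
    (fun _ _ _ => (hg.integrable_convolution _ (hint x)).integrableOn) fun S _ _ => ?_
  have hswap : Integrable (fun p : G × G => g p.2 * j x (p.1 - p.2)) ((μ.restrict S).prod μ) := by
    rw [← Measure.restrict_univ (μ := μ), Measure.prod_restrict, Measure.restrict_univ]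
    exact (hg.convolution_integrand (ContinuousLinearMap.mul ℂ ℂ) (hint x)).restrict
  calc ∫ t in S, j (convAction μ T g x) t ∂μ
      = ∫ a, (∫ t in S, g a * j x (t - a) ∂μ) ∂μ := by
        rw [convAction, setIntegral_apply_integral hint hC
          (integrable_convAction_integrand hTiso hTcont hg x)]
        refine integral_congr_ae (Eventually.of_forall fun a => ?_)
        simp only [map_smul, Pi.smul_apply, smul_eq_mul]
        rw [integral_const_mul, integral_const_mul,
          integral_congr_ae (ae_restrict_of_ae (hT a x))]
    _ = ∫ t in S, (g ⋆[ContinuousLinearMap.mul ℂ ℂ, μ] j x) t ∂μ := by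
        simp only [convolution_def, ContinuousLinearMap.mul_apply']
        exact (integral_integral_swap hswap).symm

theorem convAction_comm [μ.IsAddLeftInvariant] [μ.IsNegInvariant]
    (hint : ∀ x, Integrable (j x) μ) {C : ℝ} (hC : ∀ x, ∫ t, ‖j x t‖ ∂μ ≤ C * ‖x‖)
    (hinj : ∀ x y, j x =ᵐ[μ] j y → x = y)
    (hT : ∀ a x, j (T a x) =ᵐ[μ] fun t => j x (t - a)) (hTiso : ∀ a x, ‖T a x‖ = ‖x‖)
    (hTcont : ∀ x, Continuous fun a => T a x) (x y : E) :
    convAction μ T (j x) y = convAction μ T (j y) x := by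
  refine hinj (convAction μ T (j x) y) (convAction μ T (j y) x)
    ((apply_convAction_ae_eq_convolution hint hC hT hTiso hTcont (hint x) y).trans ?_)
  rw [← convolution_flip, ContinuousLinearMap.flip_mul]
  exact (apply_convAction_ae_eq_convolution hint hC hT hTiso hTcont (hint y) x).symm

end Embedding

section Character

variable {d : ℕ}

theorem norm_character (s t : Fin d → ℝ) : ‖character s t‖ = 1 := by
  rw [character, Complex.norm_exp]
  simp [Complex.mul_re, Complex.mul_im]

theorem character_zero_left (t : Fin d → ℝ) : character 0 t = 1 := by
  simp [character]

theorem character_add_left (s s' t : Fin d → ℝ) :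
    character (s + s') t = character s t * character s' t := by
  simp only [character, ← Complex.exp_add, Pi.add_apply, add_mul, Finset.sum_add_distrib]
  push_cast
  ring_nf

theorem character_sub_right (s t a : Fin d → ℝ) :
    character s (t - a) = character (-s) a * character s t := by
  simp only [character, ← Complex.exp_add, Pi.sub_apply, Pi.neg_apply, mul_sub, neg_mul,
    Finset.sum_sub_distrib, Finset.sum_neg_distrib]
  push_cast
  ring_nf

theorem continuous_character_left (t : Fin d → ℝ) :
    Continuous fun s : Fin d → ℝ => character s t := by
  unfold character
  fun_prop

theorem integrable_character_mul {g : (Fin d → ℝ) → ℂ} (hg : Integrable g) (s : Fin d → ℝ) :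
    Integrable (fun t => character s t * g t) :=
  hg.bdd_mul (by unfold character; fun_prop : Continuous (character s)).aestronglyMeasurable
    (Eventually.of_forall fun t => (norm_character s t).le)

theorem tendsto_integral_norm_character_mul_sub {g : (Fin d → ℝ) → ℂ} (hg : Integrable g) :
    Tendsto (fun s => ∫ t, ‖character s t * g t - g t‖) (𝓝 0) (𝓝 0) := by
  have hlim : ∀ t, Tendsto (fun s => ‖character s t * g t - g t‖) (𝓝 0) (𝓝 0) := fun t => by
    simpa [character_zero_left] using
      (((continuous_character_left t).mul (continuous_const (y := g t))).sub
        (continuous_const (y := g t))).norm.tendsto 0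
  have hbound : ∀ s t, ‖‖character s t * g t - g t‖‖ ≤ 2 * ‖g t‖ := fun s t => by
    rw [norm_norm, two_mul]
    refine (norm_sub_le _ _).trans (add_le_add_left ?_ _)
    rw [norm_mul, norm_character, one_mul]
  simpa using tendsto_integral_filter_of_dominated_convergence (fun t => 2 * ‖g t‖)
    (Eventually.of_forall fun s =>
      ((integrable_character_mul hg s).sub hg).norm.aestronglyMeasurable)
    (Eventually.of_forall fun s => Eventually.of_forall (hbound s)) (hg.norm.const_mul 2)
    (Eventually.of_forall hlim)

end Character

section Modulation

variable {d : ℕ} {E : Type*} [NormedAddCommGroup E] [NormedSpace ℂ E]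
  {j : E →ₗ[ℂ] (Fin d → ℝ) → ℂ} {T M : (Fin d → ℝ) → E →ₗ[ℂ] E}

theorem translation_zero (hinj : ∀ x y, j x =ᵐ[volume] j y → x = y)
    (hT : ∀ a x, j (T a x) =ᵐ[volume] fun t => j x (t - a)) (x : E) : T 0 x = x :=
  hinj _ _ ((hT 0 x).trans (Eventually.of_forall fun t => by simp only [sub_zero]))

theorem modulation_add (hinj : ∀ x y, j x =ᵐ[volume] j y → x = y)
    (hM : ∀ s x, j (M s x) =ᵐ[volume] fun t => character s t * j x t) (s s' : Fin d → ℝ)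
    (x : E) : M s (M s' x) = M (s + s') x := by
  refine hinj _ _ ?_
  filter_upwards [hM s (M s' x), hM s' x, hM (s + s') x] with t h₁ h₂ h₃
  rw [h₁, h₂, h₃, character_add_left, mul_assoc]

theorem translation_modulation (hinj : ∀ x y, j x =ᵐ[volume] j y → x = y)
    (hT : ∀ a x, j (T a x) =ᵐ[volume] fun t => j x (t - a))
    (hM : ∀ s x, j (M s x) =ᵐ[volume] fun t => character s t * j x t) (a s : Fin d → ℝ)
    (x : E) : T a (M s x) = character (-s) a • M s (T a x) := by
  refine hinj _ _ ?_
  have hM_sub := (measurePreserving_sub_right volume a).quasiMeasurePreserving.ae_eq_comp (hM s x)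
  filter_upwards [hT a (M s x), hM_sub, hM s (T a x), hT a x] with t h₁ h₂ h₃ h₄
  simp only [Function.comp_apply] at h₂
  rw [h₁, h₂, map_smul, Pi.smul_apply, h₃, h₄, character_sub_right, smul_eq_mul, mul_assoc]

theorem convAction_modulation [CompleteSpace E] (hinj : ∀ x y, j x =ᵐ[volume] j y → x = y)
    (hT : ∀ a x, j (T a x) =ᵐ[volume] fun t => j x (t - a))
    (hM : ∀ s x, j (M s x) =ᵐ[volume] fun t => character s t * j x t)
    (hMiso : ∀ s x, ‖M s x‖ = ‖x‖) (g : (Fin d → ℝ) → ℂ) (s : Fin d → ℝ) (y : E) :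
    convAction volume T g (M s y) =
      M s (convAction volume T (fun a => character (-s) a * g a) y) := by
  let Ms : E →ₗᵢ[ℂ] E := ⟨M s, hMiso s⟩
  refine Eq.trans ?_ (Ms.integral_comp_comm _)
  refine integral_congr_ae (Eventually.of_forall fun a => ?_)
  change g a • T a (M s y) = M s ((character (-s) a * g a) • T a y)
  rw [translation_modulation hinj hT hM, smul_smul, mul_comm, map_smul]

end Modulation

theorem continuous_apply_of_tendsto_nhds_zero {G X : Type*} [AddGroup G] [TopologicalSpace G]
    [IsTopologicalAddGroup G] [TopologicalSpace X] {M : G → X → X}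
    (hMadd : ∀ s s' x, M s (M s' x) = M (s + s') x)
    (h0 : ∀ x, Tendsto (fun s => M s x) (𝓝 0) (𝓝 x)) (x : X) :
    Continuous fun s => M s x := by
  refine continuous_iff_continuousAt.mpr fun s₀ => ?_
  have hshift : (fun s => M s x) = fun s => M (s - s₀) (M s₀ x) := by
    simp only [hMadd, sub_add_cancel]
  rw [ContinuousAt, hshift]
  exact (h0 (M s₀ x)).comp (tendsto_sub_nhds_zero_iff.mpr tendsto_id)

section Continuity

variable {d : ℕ} {E : Type*} [NormedAddCommGroup E] [NormedSpace ℂ E] [CompleteSpace E]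
  {j : E →ₗ[ℂ] (Fin d → ℝ) → ℂ} {T M : (Fin d → ℝ) → E →ₗ[ℂ] E}

theorem norm_modulation_sub_self_le (hint : ∀ x, Integrable (j x))
    {C : ℝ} (hC : ∀ x, ∫ t, ‖j x t‖ ≤ C * ‖x‖) (hinj : ∀ x y, j x =ᵐ[volume] j y → x = y)
    (hT : ∀ a x, j (T a x) =ᵐ[volume] fun t => j x (t - a)) (hTiso : ∀ a x, ‖T a x‖ = ‖x‖)
    (hTcont : ∀ x, Continuous fun a => T a x)
    (hM : ∀ s x, j (M s x) =ᵐ[volume] fun t => character s t * j x t)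
    (hMiso : ∀ s x, ‖M s x‖ = ‖x‖) (s : Fin d → ℝ) (ψ y : E) :
    ‖M s y - y‖ ≤ 2 * ‖convAction volume T (j ψ) y - y‖
      + (∫ a, ‖character (-s) a * j ψ a - j ψ a‖) * ‖y‖
      + (∫ t, ‖character s t * j y t - j y t‖) * ‖ψ‖ := by
  have hχψ := integrable_character_mul (hint ψ) (-s)
  have h₁ : ‖M s y - convAction volume T (j ψ) (M s y)‖ ≤
      ‖convAction volume T (j ψ) y - y‖
        + (∫ a, ‖character (-s) a * j ψ a - j ψ a‖) * ‖y‖ := by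
    rw [convAction_modulation hinj hT hM hMiso, ← map_sub, hMiso]
    calc _ = ‖-(convAction volume T (j ψ) y - y)
            - convAction volume T ((fun a => character (-s) a * j ψ a) - j ψ) y‖ := by
          rw [convAction_sub_left hTiso hTcont hχψ (hint ψ)]
          congr 1
          abel
      _ ≤ _ := (norm_sub_le _ _).trans (add_le_add (norm_neg _).le
          (norm_convAction_le hTiso (hχψ.sub (hint ψ)) y))
  have h₂ : ‖convAction volume T (j ψ) (M s y) - convAction volume T (j ψ) y‖ ≤
      (∫ t, ‖character s t * j y t - j y t‖) * ‖ψ‖ := by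
    rw [← convAction_sub_right hTiso hTcont (hint ψ),
      convAction_comm hint hC hinj hT hTiso hTcont]
    refine (norm_convAction_le hTiso (hint _) ψ).trans_eq ?_
    congr 1
    refine integral_congr_ae ?_
    filter_upwards [hM s y] with t ht
    rw [map_sub, Pi.sub_apply, ht]
  calc ‖M s y - y‖
      = ‖(M s y - convAction volume T (j ψ) (M s y))
          + (convAction volume T (j ψ) (M s y) - convAction volume T (j ψ) y)
          + (convAction volume T (j ψ) y - y)‖ := by
        congr 1; abel
    _ ≤ _ := norm_add₃_le
    _ ≤ _ := by linarith

theorem tendsto_modulation_nhds_zero (hint : ∀ x, Integrable (j x))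
    {C : ℝ} (hC : ∀ x, ∫ t, ‖j x t‖ ≤ C * ‖x‖) (hinj : ∀ x y, j x =ᵐ[volume] j y → x = y)
    (hdense : ∀ g : (Fin d → ℝ) → ℂ, Integrable g → ∀ ε : ℝ, 0 < ε →
      ∃ x : E, ∫ t, ‖j x t - g t‖ < ε)
    (hT : ∀ a x, j (T a x) =ᵐ[volume] fun t => j x (t - a)) (hTiso : ∀ a x, ‖T a x‖ = ‖x‖)
    (hTcont : ∀ x, Continuous fun a => T a x)
    (hM : ∀ s x, j (M s x) =ᵐ[volume] fun t => character s t * j x t)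
    (hMiso : ∀ s x, ‖M s x‖ = ‖x‖) (y : E) :
    Tendsto (fun s => M s y) (𝓝 0) (𝓝 y) := by
  refine Metric.tendsto_nhds.mpr fun ε hε => ?_
  obtain ⟨ψ, hψ⟩ := exists_norm_convAction_sub_self_lt_of_dense hint hdense hTiso hTcont
    (translation_zero hinj hT y) (half_pos hε)
  have hneg : Tendsto (fun s : Fin d → ℝ => -s) (𝓝 0) (𝓝 0) := by
    simpa using tendsto_neg (0 : Fin d → ℝ)
  have hbound : Tendsto (fun s => 2 * ‖convAction volume T (j ψ) y - y‖
      + (∫ a, ‖character (-s) a * j ψ a - j ψ a‖) * ‖y‖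
      + (∫ t, ‖character s t * j y t - j y t‖) * ‖ψ‖) (𝓝 0)
      (𝓝 (2 * ‖convAction volume T (j ψ) y - y‖ + 0 * ‖y‖ + 0 * ‖ψ‖)) :=
    (tendsto_const_nhds.add
      (((tendsto_integral_norm_character_mul_sub (hint ψ)).comp hneg).mul_const _)).add
      ((tendsto_integral_norm_character_mul_sub (hint y)).mul_const _)
  filter_upwards [hbound.eventually_lt_const (show _ < ε by linarith)] with s hs
  rw [dist_eq_norm]
  exact (norm_modulation_sub_self_le hint hC hinj hT hTiso hTcont hM hMiso s ψ y).trans_lt hs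

end Continuity

/-- Let `B` be a Segal algebra on `ℝ^d`: a Banach space `E` continuously
and densely embedded in `L¹(ℝ^d)` (via an a.e.-injective linear map `j`), invariant under
translations acting isometrically and strongly continuously. Suppose `B` is strongly
character invariant: the multiplication operators `M s` with `j (M s x) = χ_s · j x` act
isometrically on `B`. Then for every `f ∈ B` the map `s ↦ χ_s · f` is continuous from
`ℝ^d` to `B`. -/
theorem strong_character_invariance_continuous
    {d : ℕ} {E : Type*}
    [NormedAddCommGroup E] [NormedSpace ℂ E] [CompleteSpace E]
    (j : E →ₗ[ℂ] ((Fin d → ℝ) → ℂ))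
    (hint : ∀ x : E, Integrable (j x) volume)
    (hinj : ∀ x y : E, j x =ᵐ[volume] j y → x = y)
    (hemb : ∃ C : ℝ, 0 < C ∧ ∀ x : E, ∫ t, ‖j x t‖ ≤ C * ‖x‖)
    (hdense : ∀ g : (Fin d → ℝ) → ℂ, Integrable g volume →
      ∀ ε : ℝ, 0 < ε → ∃ x : E, ∫ t, ‖j x t - g t‖ < ε)
    (T : (Fin d → ℝ) → E →ₗ[ℂ] E)
    (hT : ∀ (a : Fin d → ℝ) (x : E), j (T a x) =ᵐ[volume] fun t => j x (t - a))
    (hTiso : ∀ (a : Fin d → ℝ) (x : E), ‖T a x‖ = ‖x‖)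
    (hTcont : ∀ x : E, Continuous fun a => T a x)
    (M : (Fin d → ℝ) → E →ₗ[ℂ] E)
    (hM : ∀ (s : Fin d → ℝ) (x : E), j (M s x) =ᵐ[volume] fun t => character s t * j x t)
    (hMiso : ∀ (s : Fin d → ℝ) (x : E), ‖M s x‖ = ‖x‖) :
    ∀ x : E, Continuous fun s => M s x := by
  obtain ⟨C, -, hC⟩ := hemb
  exact continuous_apply_of_tendsto_nhds_zero (modulation_add hinj hM)
    (tendsto_modulation_nhds_zero hint hC hinj hdense hT hTiso hTcont hM hMiso)
end
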